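/- arXiv:2401.00815 — 6 statements merged into one kernel-verified Lean document; each statement's English description precedes it below -/
import Mathlib

section
/- Assume the Itô-generator setting. Suppose the tuple of finite Borel measures (μ₀, μ, μ_c, μ_p) satisfies the Liouville equation, and suppose (γ, v) is dual-feasible. Then the total mass of μ_p satisfies μ_p(ℝ × ℝⁿ) ≤ γ; i.e., weak duality holds between the measure program for the worst-case probability of unsafety and its dual program in continuous functions. -/
open MeasureTheory
open scoped ENNReal

/-- The Itô generator of the SDE `dx = f dt + g dW`:
`ℒv(t,x) = ∂ₜ v + f·∇ₓ v + (1/2) gᵀ (∇²ₓₓ v) g`, expressed via the Fréchet derivative in the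
direction `(1, f p)` and the second derivative in the direction `(0, g p)` twice. -/
noncomputable def itoGen {n : ℕ}
    (f g : ℝ × EuclideanSpace ℝ (Fin n) → EuclideanSpace ℝ (Fin n))
    (v : ℝ × EuclideanSpace ℝ (Fin n) → ℝ)
    (p : ℝ × EuclideanSpace ℝ (Fin n)) : ℝ :=
  fderiv ℝ v p (1, f p) + (1 / 2) * iteratedFDeriv ℝ 2 v p ![(0, g p), (0, g p)]

/-!
Testing the Liouville equation with `v` itself gives
`∫ v dμp + ∫ v dμc = ∫ v(t₀, ·) dμ₀ + ∫ ℒv dμ`. On the supports of the measures, `v ≥ 1` bounds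
the first term below by the mass of `μp`, `v ≥ 0` makes the second nonnegative, `v(t₀, ·) ≤ γ`
bounds the third by `γ` since `μ₀` is a probability measure, and `ℒv ≤ 0` makes the last
nonpositive. Compactness of the supports makes every integral involved finite.
-/

section

variable {α : Type*} [MeasurableSpace α] {μ : Measure α}

theorem ContinuousOn.integrable_of_measure_compl_eq_zero [TopologicalSpace α] [T2Space α]
    [OpensMeasurableSpace α] [IsFiniteMeasureOnCompacts μ] {φ : α → ℝ} {K : Set α}
    (hK : IsCompact K) (hμK : μ Kᶜ = 0) (hφ : ContinuousOn φ K) : Integrable φ μ := by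
  rw [← Measure.restrict_eq_self_of_ae_mem (mem_ae_iff.2 hμK)]
  exact hφ.integrableOn_compact hK

theorem measureReal_univ_le_integral_of_ae_one_le [IsFiniteMeasure μ] {φ : α → ℝ}
    (hφ : Integrable φ μ) (h : ∀ᵐ x ∂μ, 1 ≤ φ x) : μ.real Set.univ ≤ ∫ x, φ x ∂μ := by
  simpa using integral_mono_ae (integrable_const 1) hφ h

theorem integral_le_of_ae_le_const [IsProbabilityMeasure μ] {φ : α → ℝ} {c : ℝ}
    (hφ : Integrable φ μ) (h : ∀ᵐ x ∂μ, φ x ≤ c) : ∫ x, φ x ∂μ ≤ c := by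
  simpa using integral_mono_ae hφ (integrable_const c) h

end

theorem weak_duality_unsafe_prob_general {n : ℕ}
    {X X₀ Xu : Set (EuclideanSpace ℝ (Fin n))}
    (hX : IsCompact X) (hX₀ : IsCompact X₀) (hXu : IsCompact Xu)
    {t₀ T : ℝ}
    {f g : ℝ × EuclideanSpace ℝ (Fin n) → EuclideanSpace ℝ (Fin n)}
    (μ₀ : Measure (EuclideanSpace ℝ (Fin n))) [IsProbabilityMeasure μ₀] (hμ₀ : μ₀ X₀ᶜ = 0)
    (μ μc μp : Measure (ℝ × EuclideanSpace ℝ (Fin n)))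
    [IsFiniteMeasure μc] [IsFiniteMeasure μp]
    (hμ : μ (Set.Icc t₀ T ×ˢ X)ᶜ = 0) (hμc : μc (Set.Icc t₀ T ×ˢ X)ᶜ = 0)
    (hμp : μp (Set.Icc t₀ T ×ˢ Xu)ᶜ = 0)
    (hLiou : ∀ w : ℝ × EuclideanSpace ℝ (Fin n) → ℝ, ContDiff ℝ 2 w →
      ∫ q, w q ∂(μp + μc) = (∫ x, w (t₀, x) ∂μ₀) + ∫ q, itoGen f g w q ∂μ)
    (γ : ℝ) (v : ℝ × EuclideanSpace ℝ (Fin n) → ℝ) (hv : ContDiff ℝ 2 v)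
    (hγ : ∀ x ∈ X₀, v (t₀, x) ≤ γ)
    (hLie : ∀ q ∈ Set.Icc t₀ T ×ˢ X, itoGen f g v q ≤ 0)
    (hv0 : ∀ q ∈ Set.Icc t₀ T ×ˢ X, 0 ≤ v q)
    (hv1 : ∀ q ∈ Set.Icc t₀ T ×ˢ Xu, 1 ≤ v q) :
    (μp Set.univ).toReal ≤ γ := by
  have hvc : Continuous v := hv.continuous
  have hintp : Integrable v μp :=
    hvc.continuousOn.integrable_of_measure_compl_eq_zero (isCompact_Icc.prod hXu) hμp
  have hintc : Integrable v μc :=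
    hvc.continuousOn.integrable_of_measure_compl_eq_zero (isCompact_Icc.prod hX) hμc
  have hint₀ : Integrable (fun x ↦ v (t₀, x)) μ₀ :=
    (hvc.comp (Continuous.prodMk_right t₀)).continuousOn.integrable_of_measure_compl_eq_zero
      hX₀ hμ₀
  have hp : μp.real Set.univ ≤ ∫ q, v q ∂μp :=
    measureReal_univ_le_integral_of_ae_one_le hintp
      (Filter.Eventually.mono (mem_ae_iff.2 hμp) hv1)
  have hc : 0 ≤ ∫ q, v q ∂μc :=
    integral_nonneg_of_ae (Filter.Eventually.mono (mem_ae_iff.2 hμc) hv0)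
  have h₀ : ∫ x, v (t₀, x) ∂μ₀ ≤ γ :=
    integral_le_of_ae_le_const hint₀ (Filter.Eventually.mono (mem_ae_iff.2 hμ₀) hγ)
  have hℒ : ∫ q, itoGen f g v q ∂μ ≤ 0 :=
    integral_nonpos_of_ae (Filter.Eventually.mono (mem_ae_iff.2 hμ) hLie)
  have hL := hLiou v hv
  rw [integral_add_measure hintp hintc] at hL
  rw [← measureReal_def]
  linarith

/-- Weak duality between the measure LP for the worst-case probability of unsafety and its
dual LP in continuous functions: any terminal/unsafe measure mass is at most any dual-feasible
bound `γ`. -/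
theorem weak_duality_unsafe_prob {n : ℕ} (hn : 1 ≤ n)
    {X X₀ Xu : Set (EuclideanSpace ℝ (Fin n))}
    (hX : IsCompact X) (hX₀ : IsCompact X₀) (hXu : IsCompact Xu)
    (hX₀X : X₀ ⊆ X) (hXuX : Xu ⊆ X)
    {t₀ T : ℝ} (ht₀ : 0 ≤ t₀) (ht₀T : t₀ < T)
    {f g : ℝ × EuclideanSpace ℝ (Fin n) → EuclideanSpace ℝ (Fin n)}
    (hf : Continuous f) (hg : Continuous g)
    (μ₀ : Measure (EuclideanSpace ℝ (Fin n))) [IsProbabilityMeasure μ₀] (hμ₀ : μ₀ X₀ᶜ = 0)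
    (μ μc μp : Measure (ℝ × EuclideanSpace ℝ (Fin n)))
    [IsFiniteMeasure μ] [IsFiniteMeasure μc] [IsFiniteMeasure μp]
    (hμ : μ (Set.Icc t₀ T ×ˢ X)ᶜ = 0) (hμc : μc (Set.Icc t₀ T ×ˢ X)ᶜ = 0)
    (hμp : μp (Set.Icc t₀ T ×ˢ Xu)ᶜ = 0)
    (hLiou : ∀ w : ℝ × EuclideanSpace ℝ (Fin n) → ℝ, ContDiff ℝ 2 w →
      ∫ q, w q ∂(μp + μc) = (∫ x, w (t₀, x) ∂μ₀) + ∫ q, itoGen f g w q ∂μ)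
    (γ : ℝ) (v : ℝ × EuclideanSpace ℝ (Fin n) → ℝ) (hv : ContDiff ℝ 2 v)
    (hγ : ∀ x ∈ X₀, v (t₀, x) ≤ γ)
    (hLie : ∀ q ∈ Set.Icc t₀ T ×ˢ X, itoGen f g v q ≤ 0)
    (hv0 : ∀ q ∈ Set.Icc t₀ T ×ˢ X, 0 ≤ v q)
    (hv1 : ∀ q ∈ Set.Icc t₀ T ×ˢ Xu, 1 ≤ v q) :
    (μp Set.univ).toReal ≤ γ :=
  weak_duality_unsafe_prob_general hX hX₀ hXu μ₀ hμ₀ μ μc μp hμ hμc hμp hLiou γ v hv hγ hLie hv0 hv1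
end

section
/- Assume the Itô-generator setting, and let μ₀ be a fixed probability Borel measure supported in X. Let μ and μ_c be finite Borel measures supported in [t₀,T] × X and μ_p a finite Borel measure supported in [t₀,T] × X_u such that for every twice continuously differentiable v : ℝ × ℝⁿ → ℝ one has ∫ v d(μ_p + μ_c) = ∫ v(t₀,x) dμ₀(x) + ∫ ℒv dμ. Let v : ℝ × ℝⁿ → ℝ be twice continuously differentiable with (ℒv)(t,x) ≤ 0 for all (t,x) ∈ [t₀,T] × X, v(t,x) ≥ 0 for all (t,x) ∈ [t₀,T] × X, and v(t,x) ≥ 1 for all (t,x) ∈ [t₀,T] × X_u. Then the total mass of μ_p satisfies μ_p(ℝ × ℝⁿ) ≤ ∫_X v(t₀,x) dμ₀(x); i.e., weak duality holds between the μ₀-averaged unsafe-probability measure program and the risk-contour program in continuous functions. -/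
/-! Testing the Liouville identity against the risk function `v` itself gives
`∫ v dμp + ∫ v dμc = ∫ v(t₀,·) dμ₀ + ∫ ℒv dμ`. On the supports, `v ≥ 1` bounds the first term
below by the mass of `μp`, `v ≥ 0` makes the second nonnegative and `ℒv ≤ 0` makes the last one
nonpositive. -/

open MeasureTheory
open scoped ENNReal

section

variable {α : Type*} [MeasurableSpace α] {μ : Measure α} {s : Set α}

theorem Continuous.integrable_of_measure_compl_eq_zero [TopologicalSpace α] [T2Space α]
    [OpensMeasurableSpace α] [IsFiniteMeasure μ] {v : α → ℝ} (hv : Continuous v)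
    (hs : IsCompact s) (hμs : μ sᶜ = 0) : Integrable v μ := by
  rw [← Measure.restrict_eq_self_of_ae_mem (mem_ae_iff.2 hμs)]
  exact hv.continuousOn.integrableOn_compact hs

theorem measureReal_univ_le_integral_of_one_le [IsFiniteMeasure μ] {v : α → ℝ}
    (hv : Integrable v μ) (hμs : μ sᶜ = 0) (hv1 : ∀ x ∈ s, 1 ≤ v x) :
    μ.real Set.univ ≤ ∫ x, v x ∂μ := by
  have h : ∫ _, (1 : ℝ) ∂μ ≤ ∫ x, v x ∂μ :=
    integral_mono_ae (integrable_const 1) hv <|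
      Filter.mem_of_superset (mem_ae_iff.2 hμs) hv1
  simpa using h

theorem integral_nonneg_of_measure_compl_eq_zero {v : α → ℝ} (hμs : μ sᶜ = 0)
    (hv0 : ∀ x ∈ s, 0 ≤ v x) : 0 ≤ ∫ x, v x ∂μ :=
  integral_nonneg_of_ae <| Filter.mem_of_superset (mem_ae_iff.2 hμs) hv0

theorem integral_nonpos_of_measure_compl_eq_zero {v : α → ℝ} (hμs : μ sᶜ = 0)
    (hv : ∀ x ∈ s, v x ≤ 0) : ∫ x, v x ∂μ ≤ 0 :=
  integral_nonpos_of_ae <| Filter.mem_of_superset (mem_ae_iff.2 hμs) hv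

end

theorem weak_duality_risk_contour_general {n : ℕ}
    {X Xu : Set (EuclideanSpace ℝ (Fin n))}
    (hX : IsCompact X) (hXu : IsCompact Xu)
    {t₀ T : ℝ}
    {f g : ℝ × EuclideanSpace ℝ (Fin n) → EuclideanSpace ℝ (Fin n)}
    (μ₀ : Measure (EuclideanSpace ℝ (Fin n))) (hμ₀ : μ₀ Xᶜ = 0)
    (μ μc μp : Measure (ℝ × EuclideanSpace ℝ (Fin n)))
    [IsFiniteMeasure μc] [IsFiniteMeasure μp]
    (hμ : μ (Set.Icc t₀ T ×ˢ X)ᶜ = 0) (hμc : μc (Set.Icc t₀ T ×ˢ X)ᶜ = 0)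
    (hμp : μp (Set.Icc t₀ T ×ˢ Xu)ᶜ = 0)
    (hLiou : ∀ w : ℝ × EuclideanSpace ℝ (Fin n) → ℝ, ContDiff ℝ 2 w →
      ∫ q, w q ∂(μp + μc) = (∫ x, w (t₀, x) ∂μ₀) + ∫ q, itoGen f g w q ∂μ)
    (v : ℝ × EuclideanSpace ℝ (Fin n) → ℝ) (hv : ContDiff ℝ 2 v)
    (hLie : ∀ q ∈ Set.Icc t₀ T ×ˢ X, itoGen f g v q ≤ 0)
    (hv0 : ∀ q ∈ Set.Icc t₀ T ×ˢ X, 0 ≤ v q)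
    (hv1 : ∀ q ∈ Set.Icc t₀ T ×ˢ Xu, 1 ≤ v q) :
    (μp Set.univ).toReal ≤ ∫ x in X, v (t₀, x) ∂μ₀ := by
  have hintp : Integrable v μp :=
    hv.continuous.integrable_of_measure_compl_eq_zero (isCompact_Icc.prod hXu) hμp
  have hintc : Integrable v μc :=
    hv.continuous.integrable_of_measure_compl_eq_zero (isCompact_Icc.prod hX) hμc
  have hLiou_v := hLiou v hv
  rw [integral_add_measure hintp hintc] at hLiou_v
  rw [Measure.restrict_eq_self_of_ae_mem (mem_ae_iff.2 hμ₀)]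
  have hmass := measureReal_univ_le_integral_of_one_le hintp hμp hv1
  have hc := integral_nonneg_of_measure_compl_eq_zero hμc hv0
  have hgen := integral_nonpos_of_measure_compl_eq_zero hμ hLie
  rw [measureReal_def] at hmass
  linarith

/-- Weak duality between the `μ₀`-averaged unsafe-probability measure program and the
risk-contour program in continuous functions: the mass of the unsafe component `μ_p` is
bounded by `∫_X v(t₀,·) dμ₀` for any feasible risk function `v`. -/
theorem weak_duality_risk_contour {n : ℕ} (hn : 1 ≤ n)
    {X Xu : Set (EuclideanSpace ℝ (Fin n))}
    (hX : IsCompact X) (hXu : IsCompact Xu) (hXuX : Xu ⊆ X)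
    {t₀ T : ℝ} (ht₀ : 0 ≤ t₀) (ht₀T : t₀ < T)
    {f g : ℝ × EuclideanSpace ℝ (Fin n) → EuclideanSpace ℝ (Fin n)}
    (hf : Continuous f) (hg : Continuous g)
    (μ₀ : Measure (EuclideanSpace ℝ (Fin n))) [IsProbabilityMeasure μ₀] (hμ₀ : μ₀ Xᶜ = 0)
    (μ μc μp : Measure (ℝ × EuclideanSpace ℝ (Fin n)))
    [IsFiniteMeasure μ] [IsFiniteMeasure μc] [IsFiniteMeasure μp]
    (hμ : μ (Set.Icc t₀ T ×ˢ X)ᶜ = 0) (hμc : μc (Set.Icc t₀ T ×ˢ X)ᶜ = 0)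
    (hμp : μp (Set.Icc t₀ T ×ˢ Xu)ᶜ = 0)
    (hLiou : ∀ w : ℝ × EuclideanSpace ℝ (Fin n) → ℝ, ContDiff ℝ 2 w →
      ∫ q, w q ∂(μp + μc) = (∫ x, w (t₀, x) ∂μ₀) + ∫ q, itoGen f g w q ∂μ)
    (v : ℝ × EuclideanSpace ℝ (Fin n) → ℝ) (hv : ContDiff ℝ 2 v)
    (hLie : ∀ q ∈ Set.Icc t₀ T ×ˢ X, itoGen f g v q ≤ 0)
    (hv0 : ∀ q ∈ Set.Icc t₀ T ×ˢ X, 0 ≤ v q)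
    (hv1 : ∀ q ∈ Set.Icc t₀ T ×ˢ Xu, 1 ≤ v q) :
    (μp Set.univ).toReal ≤ ∫ x in X, v (t₀, x) ∂μ₀ :=
  weak_duality_risk_contour_general hX hXu μ₀ hμ₀ μ μc μp hμ hμc hμp hLiou v hv hLie hv0 hv1
end

section
/- Let d ≥ 1 and let X ⊆ ℝ^d be compact with compact subsets X₀ ⊆ X and X_u ⊆ X; let t₀ < T be natural numbers. Let (Λ, ℬ) be a measurable space, ξ a probability measure on Λ, and f : ℕ × ℝ^d × Λ → ℝ^d measurable. For bounded measurable v : ℕ × ℝ^d → ℝ define the discrete-time generator (ℒv)(t,x) = ∫_Λ v(t+1, f(t,x,a)) dξ(a) − v(t,x). Let μ₀ be a probability Borel measure supported in X₀, let μ and μ_c be finite measures on ℕ × ℝ^d supported in {t₀,…,T} × X, and let μ_p be a finite measure supported in {t₀,…,T} × X_u, such that for every bounded measurable v one has ∫ v d(μ_p + μ_c) = ∫ v(t₀,x) dμ₀(x) + ∫ ℒv dμ. If γ ∈ ℝ and a bounded measurable v : ℕ × ℝ^d → ℝ satisfy γ ≥ v(t₀,x) for all x ∈ X₀, (ℒv)(t,x)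 ≤ 0 for all (t,x) ∈ {t₀,…,T} × X, v(t,x) ≥ 0 for all (t,x) ∈ {t₀,…,T} × X, and v(t,x) ≥ 1 for all (t,x) ∈ {t₀,…,T} × X_u, then the total mass of μ_p satisfies μ_p(ℕ × ℝ^d) ≤ γ. -/
/-!
Test the Liouville relation with the dual certificate `v`. On the left, `v ≥ 1` on the support
of `μp` and `v ≥ 0` on the support of `μc`, so the left side is at least the mass of `μp`. On the
right, `v (t₀, ·) ≤ γ` on the support of the probability measure `μ₀` and `ℒv ≤ 0` on the support
of `μ`, so the right side is at most `γ`.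
-/

open MeasureTheory

section

variable {α : Type*} [MeasurableSpace α] {ν : Measure α} {s : Set α} {g : α → ℝ}

lemma ae_of_forall_mem_of_measure_compl_eq_zero {p : α → Prop} (hs : ν sᶜ = 0)
    (hp : ∀ x ∈ s, p x) : ∀ᵐ x ∂ν, p x :=
  Filter.Eventually.mono (mem_ae_iff.2 hs) hp

lemma Measurable.integrable_of_abs_le [IsFiniteMeasure ν] (hg : Measurable g)
    (hbdd : ∃ C, ∀ x, |g x| ≤ C) : Integrable g ν := by
  obtain ⟨C, hC⟩ := hbdd
  exact .of_bound hg.aestronglyMeasurable C (ae_of_all _ hC)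

lemma toReal_measure_univ_le_integral [IsFiniteMeasure ν] (hs : ν sᶜ = 0)
    (hg : Integrable g ν) (hg1 : ∀ x ∈ s, 1 ≤ g x) : (ν Set.univ).toReal ≤ ∫ x, g x ∂ν := by
  have h := integral_mono_ae (integrable_const (1 : ℝ)) hg
    (ae_of_forall_mem_of_measure_compl_eq_zero hs hg1)
  simpa [measureReal_def] using h

lemma integral_le_of_forall_mem_le [IsProbabilityMeasure ν] {c : ℝ} (hs : ν sᶜ = 0)
    (hg : Integrable g ν) (hgc : ∀ x ∈ s, g x ≤ c) : ∫ x, g x ∂ν ≤ c := by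
  have h := integral_mono_ae hg (integrable_const c)
    (ae_of_forall_mem_of_measure_compl_eq_zero hs hgc)
  simpa using h

end

theorem weak_duality_discrete_unsafe_prob_general {d : ℕ}
    {X X₀ Xu : Set (EuclideanSpace ℝ (Fin d))}
    {t₀ T : ℕ}
    {Λ : Type*} [MeasurableSpace Λ] (ξ : Measure Λ)
    (f : ℕ × EuclideanSpace ℝ (Fin d) × Λ → EuclideanSpace ℝ (Fin d))
    (μ₀ : Measure (EuclideanSpace ℝ (Fin d))) [IsProbabilityMeasure μ₀] (hμ₀ : μ₀ X₀ᶜ = 0)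
    (μ μc μp : Measure (ℕ × EuclideanSpace ℝ (Fin d)))
    [IsFiniteMeasure μc] [IsFiniteMeasure μp]
    (hμ : μ (Set.Icc t₀ T ×ˢ X)ᶜ = 0) (hμc : μc (Set.Icc t₀ T ×ˢ X)ᶜ = 0)
    (hμp : μp (Set.Icc t₀ T ×ˢ Xu)ᶜ = 0)
    (hLiou : ∀ w : ℕ × EuclideanSpace ℝ (Fin d) → ℝ, Measurable w → (∃ C, ∀ q, |w q| ≤ C) →
      ∫ q, w q ∂(μp + μc) = (∫ x, w (t₀, x) ∂μ₀) +
        ∫ q, ((∫ a, w (q.1 + 1, f (q.1, q.2, a)) ∂ξ) - w q) ∂μ)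
    (γ : ℝ) (v : ℕ × EuclideanSpace ℝ (Fin d) → ℝ)
    (hvmeas : Measurable v) (hvbdd : ∃ C, ∀ q, |v q| ≤ C)
    (hγ : ∀ x ∈ X₀, v (t₀, x) ≤ γ)
    (hLie : ∀ q ∈ Set.Icc t₀ T ×ˢ X, (∫ a, v (q.1 + 1, f (q.1, q.2, a)) ∂ξ) - v q ≤ 0)
    (hv0 : ∀ q ∈ Set.Icc t₀ T ×ˢ X, 0 ≤ v q)
    (hv1 : ∀ q ∈ Set.Icc t₀ T ×ˢ Xu, 1 ≤ v q) :
    (μp Set.univ).toReal ≤ γ := by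
  have hLv := hLiou v hvmeas hvbdd
  rw [integral_add_measure (hvmeas.integrable_of_abs_le hvbdd)
    (hvmeas.integrable_of_abs_le hvbdd)] at hLv
  have hunsafe : (μp Set.univ).toReal ≤ ∫ q, v q ∂μp :=
    toReal_measure_univ_le_integral hμp (hvmeas.integrable_of_abs_le hvbdd) hv1
  have hcontinue : 0 ≤ ∫ q, v q ∂μc :=
    integral_nonneg_of_ae (ae_of_forall_mem_of_measure_compl_eq_zero hμc hv0)
  have hinit : ∫ x, v (t₀, x) ∂μ₀ ≤ γ := by
    obtain ⟨C, hC⟩ := hvbdd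
    exact integral_le_of_forall_mem_le hμ₀
      ((hvmeas.comp measurable_prodMk_left).integrable_of_abs_le ⟨C, fun x => hC _⟩) hγ
  have hdrift : ∫ q, ((∫ a, v (q.1 + 1, f (q.1, q.2, a)) ∂ξ) - v q) ∂μ ≤ 0 :=
    integral_nonpos_of_ae (ae_of_forall_mem_of_measure_compl_eq_zero hμ hLie)
  linarith

/-- Weak duality for the discrete-time unsafe-probability linear program: for the
discrete-time generator `(ℒv)(t,x) = ∫_Λ v(t+1, f(t,x,a)) dξ(a) − v(t,x)`, any occupation
measure tuple satisfying the martingale (Liouville/Dynkin) relation has its unsafe-component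
mass bounded by any dual-feasible bound `γ`. -/
theorem weak_duality_discrete_unsafe_prob {d : ℕ} (hd : 1 ≤ d)
    {X X₀ Xu : Set (EuclideanSpace ℝ (Fin d))}
    (hX : IsCompact X) (hX₀ : IsCompact X₀) (hXu : IsCompact Xu)
    (hX₀X : X₀ ⊆ X) (hXuX : Xu ⊆ X)
    {t₀ T : ℕ} (ht₀T : t₀ < T)
    {Λ : Type*} [MeasurableSpace Λ] (ξ : Measure Λ) [IsProbabilityMeasure ξ]
    (f : ℕ × EuclideanSpace ℝ (Fin d) × Λ → EuclideanSpace ℝ (Fin d)) (hf : Measurable f)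
    (μ₀ : Measure (EuclideanSpace ℝ (Fin d))) [IsProbabilityMeasure μ₀] (hμ₀ : μ₀ X₀ᶜ = 0)
    (μ μc μp : Measure (ℕ × EuclideanSpace ℝ (Fin d)))
    [IsFiniteMeasure μ] [IsFiniteMeasure μc] [IsFiniteMeasure μp]
    (hμ : μ (Set.Icc t₀ T ×ˢ X)ᶜ = 0) (hμc : μc (Set.Icc t₀ T ×ˢ X)ᶜ = 0)
    (hμp : μp (Set.Icc t₀ T ×ˢ Xu)ᶜ = 0)
    (hLiou : ∀ w : ℕ × EuclideanSpace ℝ (Fin d) → ℝ, Measurable w → (∃ C, ∀ q, |w q| ≤ C) →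
      ∫ q, w q ∂(μp + μc) = (∫ x, w (t₀, x) ∂μ₀) +
        ∫ q, ((∫ a, w (q.1 + 1, f (q.1, q.2, a)) ∂ξ) - w q) ∂μ)
    (γ : ℝ) (v : ℕ × EuclideanSpace ℝ (Fin d) → ℝ)
    (hvmeas : Measurable v) (hvbdd : ∃ C, ∀ q, |v q| ≤ C)
    (hγ : ∀ x ∈ X₀, v (t₀, x) ≤ γ)
    (hLie : ∀ q ∈ Set.Icc t₀ T ×ˢ X, (∫ a, v (q.1 + 1, f (q.1, q.2, a)) ∂ξ) - v q ≤ 0)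
    (hv0 : ∀ q ∈ Set.Icc t₀ T ×ˢ X, 0 ≤ v q)
    (hv1 : ∀ q ∈ Set.Icc t₀ T ×ˢ Xu, 1 ≤ v q) :
    (μp Set.univ).toReal ≤ γ :=
  weak_duality_discrete_unsafe_prob_general ξ f μ₀ hμ₀ μ μc μp hμ hμc hμp hLiou γ v hvmeas hvbdd hγ
    hLie hv0 hv1
end

section
/- Assume the Itô-generator setting. Suppose the tuple of finite Borel measures (μ₀, μ, μ_c, μ_p) satisfies the Liouville equation. Then: (i) the total mass of μ_p + μ_c equals 1 (in particular μ_p has total mass at most 1), and (ii) the total mass of μ satisfies μ(ℝ × ℝⁿ) ≤ T − t₀. Hence all feasible measure tuples of the unsafe-probability linear program are bounded. -/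
/-!
Testing the Liouville equation against `1` and against the time coordinate `t`, whose Itô
generators are `0` and `1`, gives `(μp + μc)(univ) = 1` and
`μ(univ) = ∫ t d(μp + μc) - t₀`. Since `μp + μc` is then a probability measure living on
times `t ≤ T`, the last integral is at most `T`.
-/

open MeasureTheory
open scoped ENNReal

theorem ContinuousLinearMap.iteratedFDeriv_two_eq_zero {𝕜 E F : Type*}
    [NontriviallyNormedField 𝕜] [NormedAddCommGroup E] [NormedSpace 𝕜 E] [NormedAddCommGroup F] [NormedSpace 𝕜 F]
    (L : E →L[𝕜] F) (x : E) : iteratedFDeriv 𝕜 2 L x = 0 := by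
  have hL : fderiv 𝕜 L = fun _ => L := funext fun _ => L.fderiv
  ext m
  simp [iteratedFDeriv_two_apply, hL]

section ItoGenerator

variable {n : ℕ} (f g : ℝ × EuclideanSpace ℝ (Fin n) → EuclideanSpace ℝ (Fin n))

theorem itoGen_const (c : ℝ) (p : ℝ × EuclideanSpace ℝ (Fin n)) :
    itoGen f g (fun _ => c) p = 0 := by
  simp [itoGen, iteratedFDeriv_const_of_ne two_ne_zero]

theorem itoGen_fst (p : ℝ × EuclideanSpace ℝ (Fin n)) : itoGen f g Prod.fst p = 1 := by
  have h : iteratedFDeriv ℝ 2 Prod.fst p = 0 :=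
    (ContinuousLinearMap.fst ℝ ℝ (EuclideanSpace ℝ (Fin n))).iteratedFDeriv_two_eq_zero p
  simp [itoGen, h, fderiv_fst]

end ItoGenerator

theorem integral_le_of_ae_mem_Icc {α : Type*} [MeasurableSpace α] {ν : Measure α}
    [IsProbabilityMeasure ν] {φ : α → ℝ} (hφ : AEStronglyMeasurable φ ν) {a b : ℝ}
    (hab : ∀ᵐ x ∂ν, φ x ∈ Set.Icc a b) : ∫ x, φ x ∂ν ≤ b := by
  have hint : Integrable φ ν :=
    Integrable.mono' (integrable_const (max |a| |b|)) hφ <|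
      hab.mono fun x hx => abs_le_max_abs_abs hx.1 hx.2
  simpa using integral_mono_ae hint (integrable_const b) (hab.mono fun x hx => hx.2)

theorem feasible_measures_bounded_general {n : ℕ}
    {X Xu : Set (EuclideanSpace ℝ (Fin n))}
    {t₀ T : ℝ}
    {f g : ℝ × EuclideanSpace ℝ (Fin n) → EuclideanSpace ℝ (Fin n)}
    (μ₀ : Measure (EuclideanSpace ℝ (Fin n))) [IsProbabilityMeasure μ₀]
    (μ μc μp : Measure (ℝ × EuclideanSpace ℝ (Fin n)))
    [IsFiniteMeasure μ]
    (hμc : μc (Set.Icc t₀ T ×ˢ X)ᶜ = 0)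
    (hμp : μp (Set.Icc t₀ T ×ˢ Xu)ᶜ = 0)
    (hLiou : ∀ w : ℝ × EuclideanSpace ℝ (Fin n) → ℝ, ContDiff ℝ 2 w →
      ∫ q, w q ∂(μp + μc) = (∫ x, w (t₀, x) ∂μ₀) + ∫ q, itoGen f g w q ∂μ) :
    (μp + μc) Set.univ = 1 ∧ μp Set.univ ≤ 1 ∧
      μ Set.univ ≤ ENNReal.ofReal (T - t₀) := by
  have hmass : (μp + μc) Set.univ = 1 := by
    simpa [itoGen_const, measureReal_def, ENNReal.toReal_eq_one_iff] using
      hLiou (fun _ => 1) contDiff_const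
  have : IsProbabilityMeasure (μp + μc) := ⟨hmass⟩
  have htime : ∀ᵐ q ∂(μp + μc), q.1 ∈ Set.Icc t₀ T := by
    rw [ae_add_measure_iff]
    exact ⟨Filter.mem_of_superset (mem_ae_iff.2 hμp) fun q hq => hq.1,
      Filter.mem_of_superset (mem_ae_iff.2 hμc) fun q hq => hq.1⟩
  have hocc : ∫ q, q.1 ∂(μp + μc) = t₀ + μ.real Set.univ := by
    simpa [itoGen_fst] using hLiou Prod.fst contDiff_fst
  have hT := integral_le_of_ae_mem_Icc continuous_fst.aestronglyMeasurable htime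
  refine ⟨hmass, hmass ▸ Measure.le_add_right le_rfl Set.univ, ?_⟩
  rw [← ofReal_measureReal (measure_ne_top μ _)]
  exact ENNReal.ofReal_le_ofReal (by linarith)

/-- All feasible measure tuples of the unsafe-probability LP are bounded: the Liouville
equation forces `μ_p + μ_c` to have total mass `1` (so `μ_p` has mass at most `1`) and the
occupation measure `μ` to have total mass at most `T − t₀`. -/
theorem feasible_measures_bounded {n : ℕ} (hn : 1 ≤ n)
    {X X₀ Xu : Set (EuclideanSpace ℝ (Fin n))}
    (hX : IsCompact X) (hX₀ : IsCompact X₀) (hXu : IsCompact Xu)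
    (hX₀X : X₀ ⊆ X) (hXuX : Xu ⊆ X)
    {t₀ T : ℝ} (ht₀ : 0 ≤ t₀) (ht₀T : t₀ < T)
    {f g : ℝ × EuclideanSpace ℝ (Fin n) → EuclideanSpace ℝ (Fin n)}
    (hf : Continuous f) (hg : Continuous g)
    (μ₀ : Measure (EuclideanSpace ℝ (Fin n))) [IsProbabilityMeasure μ₀] (hμ₀ : μ₀ X₀ᶜ = 0)
    (μ μc μp : Measure (ℝ × EuclideanSpace ℝ (Fin n)))
    [IsFiniteMeasure μ] [IsFiniteMeasure μc] [IsFiniteMeasure μp]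
    (hμ : μ (Set.Icc t₀ T ×ˢ X)ᶜ = 0) (hμc : μc (Set.Icc t₀ T ×ˢ X)ᶜ = 0)
    (hμp : μp (Set.Icc t₀ T ×ˢ Xu)ᶜ = 0)
    (hLiou : ∀ w : ℝ × EuclideanSpace ℝ (Fin n) → ℝ, ContDiff ℝ 2 w →
      ∫ q, w q ∂(μp + μc) = (∫ x, w (t₀, x) ∂μ₀) + ∫ q, itoGen f g w q ∂μ) :
    (μp + μc) Set.univ = 1 ∧ μp Set.univ ≤ 1 ∧
      μ Set.univ ≤ ENNReal.ofReal (T - t₀) :=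
  feasible_measures_bounded_general μ₀ μ μc μp hμc hμp hLiou
end

section
/- Let (Ω, 𝒜, μ) be a probability space with filtration (ℱ_n)_{n∈ℕ}, let d ≥ 1, let Y : ℕ → Ω → ℝ^d be a sequence of random variables with each Y_n ℱ_n-measurable, and let X_u ⊆ ℝ^d be a Borel set. Let v : ℕ → ℝ^d → ℝ be a sequence of Borel functions such that v_n(x) ≥ 0 for all n ∈ ℕ and x ∈ ℝ^d, v_n(x) ≥ 1 for all n ∈ ℕ and x ∈ X_u, and the process n ↦ (ω ↦ v_n(Y_n(ω))) is a supermartingale with respect to (ℱ_n) and μ. Then for every N ∈ ℕ: μ{ ω : ∃ n ≤ N, Y_n(ω) ∈ X_u } ≤ ∫_Ω v_0(Y_0(ω)) dμ(ω). In other words, any nonnegative supermartingale certificate exceeding 1 on the unsafe set upper-bounds the probability of reaching the unsafe set. -/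
open MeasureTheory

/-!
Stop the supermartingale `f n = v n ∘ Y n` at the first time `τ ≤ N` at which it reaches `1`.
Whenever `Y` enters the unsafe set before `N`, the stopped value `f τ` is at least `1`, so by
Markov's inequality (`f τ ≥ 0`) and optional stopping (`𝔼[f τ] ≤ 𝔼[f 0]`) the probability of
reaching the unsafe set is at most `𝔼[f 0]`.
-/

namespace MeasureTheory.Supermartingale

variable {Ω : Type*} {m : MeasurableSpace Ω} {μ : Measure Ω} {ℱ : Filtration ℕ m}
  {f : ℕ → Ω → ℝ}

theorem integrable_stoppedValue (hf : Supermartingale f ℱ μ) {τ : Ω → ℕ∞}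
    (hτ : IsStoppingTime ℱ τ) {N : ℕ} (hbdd : ∀ ω, τ ω ≤ N) :
    Integrable (stoppedValue f τ) μ := by
  exact (hf.neg.integrable_stoppedValue hτ hbdd).neg.congr (.of_forall fun _ ↦ neg_neg _)

theorem expected_stoppedValue_anti [SigmaFiniteFiltration μ ℱ] (hf : Supermartingale f ℱ μ)
    {τ π : Ω → ℕ∞} (hτ : IsStoppingTime ℱ τ) (hπ : IsStoppingTime ℱ π) (hle : τ ≤ π)
    {N : ℕ} (hbdd : ∀ ω, π ω ≤ N) : ∫ ω, stoppedValue f π ω ∂μ ≤ ∫ ω, stoppedValue f τ ω ∂μ := by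
  have := hf.neg.expected_stoppedValue_mono hτ hπ hle hbdd
  simpa only [stoppedValue, Pi.neg_apply, integral_neg, neg_le_neg_iff] using this

/-- Ville's maximal inequality for a nonnegative supermartingale on a finite horizon. -/
theorem mul_measureReal_exists_ge_le_integral [IsFiniteMeasure μ] (hf : Supermartingale f ℱ μ)
    (hnonneg : 0 ≤ f) {ε : ℝ} (hε : 0 ≤ ε) (N : ℕ) :
    ε * μ.real {ω | ∃ n ≤ N, ε ≤ f n ω} ≤ ∫ ω, f 0 ω ∂μ := by
  set τ : Ω → ℕ∞ := fun ω ↦ (hittingBtwn f (Set.Ici ε) 0 N ω : ℕ)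
  have hτ : IsStoppingTime ℱ τ :=
    Adapted.isStoppingTime_hittingBtwn hf.stronglyAdapted.adapted measurableSet_Ici
  have hτN : ∀ ω, τ ω ≤ N := fun ω ↦ WithTop.coe_le_coe.mpr (hittingBtwn_le ω)
  have hreach : {ω | ∃ n ≤ N, ε ≤ f n ω} ⊆ {ω | ε ≤ stoppedValue f τ ω} :=
    fun _ ⟨n, hn, hεn⟩ ↦ stoppedValue_hittingBtwn_mem ⟨n, ⟨n.zero_le, hn⟩, hεn⟩
  calc ε * μ.real {ω | ∃ n ≤ N, ε ≤ f n ω}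
      ≤ ε * μ.real {ω | ε ≤ stoppedValue f τ ω} :=
        mul_le_mul_of_nonneg_left (measureReal_mono hreach) hε
    _ ≤ ∫ ω, stoppedValue f τ ω ∂μ :=
        mul_meas_ge_le_integral_of_nonneg (.of_forall fun ω ↦ hnonneg _ ω)
          (hf.integrable_stoppedValue hτ hτN) ε
    _ ≤ ∫ ω, stoppedValue f (fun _ ↦ (0 : ℕ)) ω ∂μ :=
        expected_stoppedValue_anti hf (isStoppingTime_const ℱ 0) hτ
          (fun _ ↦ WithTop.coe_le_coe.mpr bot_le) hτN
    _ = ∫ ω, f 0 ω ∂μ := rfl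

end MeasureTheory.Supermartingale

theorem supermartingale_certificate_bounds_unsafe_prob_general
    {Ω : Type*} [m : MeasurableSpace Ω] {μ : Measure Ω} [IsProbabilityMeasure μ]
    (ℱ : Filtration ℕ m) {d : ℕ}
    (Y : ℕ → Ω → EuclideanSpace ℝ (Fin d))
    {Xu : Set (EuclideanSpace ℝ (Fin d))}
    (v : ℕ → EuclideanSpace ℝ (Fin d) → ℝ)
    (hv0 : ∀ n x, 0 ≤ v n x) (hv1 : ∀ n, ∀ x ∈ Xu, 1 ≤ v n x)
    (hsup : Supermartingale (fun n ω => v n (Y n ω)) ℱ μ) (N : ℕ) :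
    (μ {ω | ∃ n ≤ N, Y n ω ∈ Xu}).toReal ≤ ∫ ω, v 0 (Y 0 ω) ∂μ := by
  have hunsafe : {ω | ∃ n ≤ N, Y n ω ∈ Xu} ⊆ {ω | ∃ n ≤ N, 1 ≤ v n (Y n ω)} :=
    fun _ ⟨n, hn, hY⟩ ↦ ⟨n, hn, hv1 n _ hY⟩
  calc μ.real {ω | ∃ n ≤ N, Y n ω ∈ Xu}
      ≤ μ.real {ω | ∃ n ≤ N, 1 ≤ v n (Y n ω)} := measureReal_mono hunsafe
    _ ≤ ∫ ω, v 0 (Y 0 ω) ∂μ := by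
        simpa using hsup.mul_measureReal_exists_ge_le_integral (fun n ω ↦ hv0 n _) zero_le_one N

/-- A nonnegative supermartingale certificate `v` exceeding `1` on the unsafe set `X_u`
upper-bounds the probability that the process `Y` reaches `X_u` within the horizon `N`. -/
theorem supermartingale_certificate_bounds_unsafe_prob
    {Ω : Type*} [m : MeasurableSpace Ω] {μ : Measure Ω} [IsProbabilityMeasure μ]
    (ℱ : Filtration ℕ m) {d : ℕ} (hd : 1 ≤ d)
    (Y : ℕ → Ω → EuclideanSpace ℝ (Fin d)) (hY : ∀ n, Measurable[ℱ n] (Y n))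
    {Xu : Set (EuclideanSpace ℝ (Fin d))} (hXu : MeasurableSet Xu)
    (v : ℕ → EuclideanSpace ℝ (Fin d) → ℝ) (hvmeas : ∀ n, Measurable (v n))
    (hv0 : ∀ n x, 0 ≤ v n x) (hv1 : ∀ n, ∀ x ∈ Xu, 1 ≤ v n x)
    (hsup : Supermartingale (fun n ω => v n (Y n ω)) ℱ μ) (N : ℕ) :
    (μ {ω | ∃ n ≤ N, Y n ω ∈ Xu}).toReal ≤ ∫ ω, v 0 (Y 0 ω) ∂μ :=
  supermartingale_certificate_bounds_unsafe_prob_general (m := m) ℱ Y v hv0 hv1 hsup N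
end

section
/- Let (Ω, 𝒜, μ) be a probability space, (Λ, ℬ) a measurable space, ξ a probability measure on Λ, and (λ_n)_{n∈ℕ} a sequence of Λ-valued random variables on Ω that is independent with common distribution ξ (i.e., the family (λ_n) is mutually independent and the pushforward of μ under each λ_n equals ξ). Let d ≥ 1, let f : ℕ → ℝ^d → Λ → ℝ^d be measurable, let x₀ ∈ ℝ^d, and define X : ℕ → Ω → ℝ^d recursively by X_0(ω) = x₀ and X_{n+1}(ω) = f(n, X_n(ω), λ_n(ω)). Let ℱ_n be the σ-algebra generated by λ_0, …, λ_{n−1}. Let v : ℕ → ℝ^d → ℝ be a bounded measurable function such that for every n ∈ ℕ and every x ∈ ℝ^d: ∫_Λ v(n+1, f(n, x, a)) dξ(a) ≤ v(n, x). Then the process n ↦ (ω ↦ v(n, X_n(ω))) is a supermartingale with respect to the filtration (ℱ_n) and μ. -/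
/-!
Since `X n` is `ℱ n`-measurable and `λ n` is independent of `ℱ n` with law `ξ`, freezing
`X n` gives `E[v(n+1, X (n+1)) | ℱ n] = ∫ v(n+1, f(n, X n, a)) dξ(a)` a.e., which is at most
`v(n, X n)` by the generator inequality. The freezing identity is Fubini for the product law of the
independent pair `(X n, λ n)`, tested against `ℱ n`-measurable sets.
-/

open MeasureTheory ProbabilityTheory

namespace ProbabilityTheory

variable {Ω E Λ G : Type*} {m' m : MeasurableSpace Ω} {μ : Measure Ω}

theorem iIndepFun.indep_comap_iSup_of_notMem {ι : Type*} {β : ι → Type*}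
    [∀ i, MeasurableSpace (β i)] {f : ∀ i, Ω → β i} (hf_indep : iIndepFun f μ)
    (hf : ∀ i, Measurable (f i)) {i : ι} {S : Finset ι} (hi : i ∉ S) :
    Indep (MeasurableSpace.comap (f i) inferInstance)
      (⨆ j ∈ S, MeasurableSpace.comap (f j) inferInstance) μ := by
  have h := indep_iSup_of_disjoint (fun j => (hf j).comap_le) hf_indep
    (S := {i}) (T := S) (Set.disjoint_singleton_left.2 hi)
  rwa [iSup_singleton] at h

variable [IsFiniteMeasure μ] [MeasurableSpace E] [MeasurableSpace Λ] [NormedAddCommGroup G]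
  {W : Ω → E} {Z : Ω → Λ} {g : E × Λ → G}

theorem IndepFun.integrable_prod_map (hWZ : IndepFun W Z μ) (hW : Measurable W)
    (hZ : Measurable Z) (hg : StronglyMeasurable g)
    (hgi : Integrable (fun ω => g (W ω, Z ω)) μ) :
    Integrable g ((μ.map W).prod (μ.map Z)) := by
  rw [← hWZ.map_prod_eq_prod_map_map hW.aemeasurable hZ.aemeasurable]
  exact (integrable_map_measure hg.aestronglyMeasurable (hW.prodMk hZ).aemeasurable).2 hgi

variable [NormedSpace ℝ G]

theorem IndepFun.integral_comp_prodMk (hWZ : IndepFun W Z μ) (hW : Measurable W)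
    (hZ : Measurable Z) (hg : StronglyMeasurable g)
    (hgi : Integrable (fun ω => g (W ω, Z ω)) μ) :
    ∫ ω, g (W ω, Z ω) ∂μ = ∫ ω, ∫ z, g (W ω, z) ∂(μ.map Z) ∂μ := by
  calc ∫ ω, g (W ω, Z ω) ∂μ = ∫ p, g p ∂(μ.map fun ω => (W ω, Z ω)) :=
        (integral_map (hW.prodMk hZ).aemeasurable hg.aestronglyMeasurable).symm
    _ = ∫ p, g p ∂((μ.map W).prod (μ.map Z)) := by
        rw [hWZ.map_prod_eq_prod_map_map hW.aemeasurable hZ.aemeasurable]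
    _ = ∫ w, ∫ z, g (w, z) ∂(μ.map Z) ∂(μ.map W) :=
        integral_prod g (hWZ.integrable_prod_map hW hZ hg hgi)
    _ = ∫ ω, ∫ z, g (W ω, z) ∂(μ.map Z) ∂μ :=
        integral_map hW.aemeasurable hg.integral_prod_right'.aestronglyMeasurable

theorem condExp_comp_prodMk_ae_eq_integral [CompleteSpace G] {Y : Ω → E}
    (hm' : m' ≤ m) (hY : Measurable[m'] Y) (hZ : Measurable Z)
    (hindep : Indep (MeasurableSpace.comap Z inferInstance) m' μ) (hg : StronglyMeasurable g)
    (hgi : Integrable (fun ω => g (Y ω, Z ω)) μ) :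
    μ[fun ω => g (Y ω, Z ω) | m'] =ᵐ[μ] fun ω => ∫ z, g (Y ω, z) ∂(μ.map Z) := by
  have hYm : Measurable Y := hY.mono hm' le_rfl
  have hIg : StronglyMeasurable[m'] fun ω => ∫ z, g (Y ω, z) ∂(μ.map Z) :=
    hg.integral_prod_right'.comp_measurable hY
  have hYZ : IndepFun Y Z μ := indep_of_indep_of_le_left hindep.symm hY.comap_le
  have hIgi : Integrable (fun ω => ∫ z, g (Y ω, z) ∂(μ.map Z)) μ :=
    ((integrable_map_measure hg.integral_prod_right'.aestronglyMeasurable hYm.aemeasurable).1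
      (hYZ.integrable_prod_map hYm hZ hg hgi).integral_prod_left)
  have : IsFiniteMeasure (μ.trim hm') := isFiniteMeasure_trim hm'
  refine (ae_eq_condExp_of_forall_setIntegral_eq hm' hgi (fun s _ _ => hIgi.integrableOn)
    (fun s hs _ => ?_) hIg.aestronglyMeasurable).symm
  -- Absorb the test set into the frozen variable: `(Y, 1_s)` is still `m'`-measurable.
  set W : Ω → E × ℝ := fun ω => (Y ω, s.indicator 1 ω)
  have hW : Measurable[m'] W := hY.prodMk (measurable_const.indicator hs)
  have hWZ : IndepFun W Z μ := indep_of_indep_of_le_left hindep.symm hW.comap_le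
  have hsmul : ∀ F : Ω → G, s.indicator F = fun ω => (s.indicator 1 ω : ℝ) • F ω :=
    fun F => funext fun ω => by by_cases h : ω ∈ s <;> simp [h]
  have hg' : StronglyMeasurable fun p : (E × ℝ) × Λ => p.1.2 • g (p.1.1, p.2) :=
    measurable_fst.snd.stronglyMeasurable.smul
      (hg.comp_measurable (measurable_fst.fst.prodMk measurable_snd))
  calc ∫ ω in s, ∫ z, g (Y ω, z) ∂(μ.map Z) ∂μ
      = ∫ ω, ∫ z, (W ω).2 • g ((W ω).1, z) ∂(μ.map Z) ∂μ := by
        simp only [← integral_indicator (hm' s hs), hsmul, integral_smul, W]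
    _ = ∫ ω, (W ω).2 • g ((W ω).1, Z ω) ∂μ := by
        refine (hWZ.integral_comp_prodMk (hW.mono hm' le_rfl) hZ hg' ?_).symm
        simpa only [hsmul, W] using hgi.indicator (hm' s hs)
    _ = ∫ ω in s, g (Y ω, Z ω) ∂μ := by
        simp only [← integral_indicator (hm' s hs), hsmul, W]

end ProbabilityTheory

open ProbabilityTheory

theorem adapted_of_recursion {Ω E Λ : Type*} {m : MeasurableSpace Ω} [MeasurableSpace E]
    [MeasurableSpace Λ] {ℱ : Filtration ℕ m} {X : ℕ → Ω → E} {lam : ℕ → Ω → Λ}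
    {f : ℕ → E → Λ → E} (hf : ∀ n, Measurable (Function.uncurry (f n)))
    (hX0 : Measurable[ℱ 0] (X 0)) (hlam : ∀ n, Measurable[ℱ (n + 1)] (lam n))
    (hXrec : ∀ n ω, X (n + 1) ω = f n (X n ω) (lam n ω)) :
    Adapted ℱ X := by
  intro n
  induction n with
  | zero => exact hX0
  | succ n ih =>
    rw [funext (hXrec n)]
    exact (hf n).comp ((ih.mono (ℱ.mono n.le_succ) le_rfl).prodMk (hlam n))

theorem nonpositive_generator_supermartingale_general
    {Ω : Type*} [m : MeasurableSpace Ω] {μ : Measure Ω} [IsProbabilityMeasure μ]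
    {Λ : Type*} [mΛ : MeasurableSpace Λ] (ξ : Measure Λ)
    (lam : ℕ → Ω → Λ) (hmeas : ∀ n, Measurable (lam n))
    (hindep : ProbabilityTheory.iIndepFun lam μ)
    (hdist : ∀ n, μ.map (lam n) = ξ)
    {d : ℕ}
    (f : ℕ → EuclideanSpace ℝ (Fin d) → Λ → EuclideanSpace ℝ (Fin d))
    (hf : Measurable fun p : ℕ × EuclideanSpace ℝ (Fin d) × Λ => f p.1 p.2.1 p.2.2)
    (x₀ : EuclideanSpace ℝ (Fin d))
    (X : ℕ → Ω → EuclideanSpace ℝ (Fin d))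
    (hX0 : ∀ ω, X 0 ω = x₀)
    (hXrec : ∀ n ω, X (n + 1) ω = f n (X n ω) (lam n ω))
    (ℱ : Filtration ℕ m)
    (hℱ : ∀ n, ℱ n = ⨆ i ∈ Finset.range n, MeasurableSpace.comap (lam i) mΛ)
    (v : ℕ → EuclideanSpace ℝ (Fin d) → ℝ)
    (hvmeas : Measurable fun p : ℕ × EuclideanSpace ℝ (Fin d) => v p.1 p.2)
    (hvbdd : ∃ C, ∀ n x, |v n x| ≤ C)
    (hgen : ∀ n x, ∫ a, v (n + 1) (f n x a) ∂ξ ≤ v n x) :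
    Supermartingale (fun n ω => v n (X n ω)) ℱ μ := by
  obtain ⟨C, hC⟩ := hvbdd
  have hv : ∀ n, Measurable (v n) := fun n => hvmeas.comp measurable_prodMk_left
  have hfn : ∀ n, Measurable (Function.uncurry (f n)) := fun n => hf.comp measurable_prodMk_left
  have hlam : ∀ n, Measurable[ℱ (n + 1)] (lam n) := fun n => by
    rw [hℱ]
    exact measurable_iff_comap_le.2 (le_iSup₂_of_le n (Finset.self_mem_range_succ n) le_rfl)
  have hX : Adapted ℱ X := adapted_of_recursion hfn
    (by rw [funext hX0]; exact measurable_const) hlam hXrec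
  have hint : ∀ n, Integrable (fun ω => v n (X n ω)) μ := fun n =>
    .of_bound ((hv n).comp ((hX n).mono (ℱ.le n) le_rfl)).aestronglyMeasurable C
      (ae_of_all _ fun ω => hC n (X n ω))
  refine supermartingale_nat (fun n => ((hv n).comp (hX n)).stronglyMeasurable) hint fun n => ?_
  have hindep_n : Indep (MeasurableSpace.comap (lam n) mΛ) (ℱ n) μ := by
    rw [hℱ]
    exact hindep.indep_comap_iSup_of_notMem hmeas Finset.notMem_range_self
  have hcond := condExp_comp_prodMk_ae_eq_integral (ℱ.le n) (hX n) (hmeas n) hindep_n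
    (g := fun p => v (n + 1) (f n p.1 p.2)) ((hv _).comp (hfn n)).stronglyMeasurable
    (by simpa only [hXrec] using hint (n + 1))
  simp only [hXrec, hdist] at hcond ⊢
  exact hcond.le.trans (ae_of_all _ fun ω => hgen n (X n ω))

/-- If the discrete-time generator of the stochastic recursion `X_{n+1} = f(n, X_n, λ_n)`
applied to a bounded measurable `v` is nonpositive, i.e.
`∫_Λ v(n+1, f(n,x,a)) dξ(a) ≤ v(n,x)` for all `n, x`, then `n ↦ v(n, X_n)` is a
supermartingale with respect to the filtration `ℱ_n = σ(λ_0, …, λ_{n−1})`. -/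
theorem nonpositive_generator_supermartingale
    {Ω : Type*} [m : MeasurableSpace Ω] {μ : Measure Ω} [IsProbabilityMeasure μ]
    {Λ : Type*} [mΛ : MeasurableSpace Λ] (ξ : Measure Λ) [IsProbabilityMeasure ξ]
    (lam : ℕ → Ω → Λ) (hmeas : ∀ n, Measurable (lam n))
    (hindep : ProbabilityTheory.iIndepFun lam μ)
    (hdist : ∀ n, μ.map (lam n) = ξ)
    {d : ℕ} (hd : 1 ≤ d)
    (f : ℕ → EuclideanSpace ℝ (Fin d) → Λ → EuclideanSpace ℝ (Fin d))
    (hf : Measurable fun p : ℕ × EuclideanSpace ℝ (Fin d) × Λ => f p.1 p.2.1 p.2.2)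
    (x₀ : EuclideanSpace ℝ (Fin d))
    (X : ℕ → Ω → EuclideanSpace ℝ (Fin d))
    (hX0 : ∀ ω, X 0 ω = x₀)
    (hXrec : ∀ n ω, X (n + 1) ω = f n (X n ω) (lam n ω))
    (ℱ : Filtration ℕ m)
    (hℱ : ∀ n, ℱ n = ⨆ i ∈ Finset.range n, MeasurableSpace.comap (lam i) mΛ)
    (v : ℕ → EuclideanSpace ℝ (Fin d) → ℝ)
    (hvmeas : Measurable fun p : ℕ × EuclideanSpace ℝ (Fin d) => v p.1 p.2)
    (hvbdd : ∃ C, ∀ n x, |v n x| ≤ C)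
    (hgen : ∀ n x, ∫ a, v (n + 1) (f n x a) ∂ξ ≤ v n x) :
    Supermartingale (fun n ω => v n (X n ω)) ℱ μ :=
  nonpositive_generator_supermartingale_general (m := m) (mΛ := mΛ) ξ lam hmeas hindep hdist f hf x₀
    X hX0 hXrec ℱ hℱ v hvmeas hvbdd hgen
end
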